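/- arXiv:1910.01353 — 2 statements merged into one kernel-verified Lean document; each statement's English description precedes it below -/
import Mathlib

section
/- If ε ≤ L_{W,Θ}, then the aggregated mixing inequality derived from Θ implies the linking constraint y_1 + ⋯ + y_k ≥ ε on the box 0 ≤ z ≤ 1. More precisely, for any (y,z) ∈ ℝ^k × [0,1]^n satisfying the aggregated mixing inequality Σ_{j∈[k]} (y_j + Σ_{s∈[τ_j]} (w_{j_s,j} − w_{j_{s+1},j}) z_{j_s}) − ε z_{i_θ} ≥ Σ_{j∈[k]} max{w_{i,j} : i∈Θ}, one has Σ_{j∈[k]} y_j ≥ ε. -/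
/-!
The coefficient `(w_{i_t,j} − max{w_{i,j} : i_t precedes i in Θ})_+` of `z_{i_t}` is nonnegative,
and along `Θ` these coefficients telescope to `max{w_{i,j} : i ∈ Θ}`. Bounding every `z_{i_t}`
except the last by `1` therefore turns the aggregated inequality into
`Σ_j y_j ≥ (Σ_j (w_{i_θ,j})_+) (1 − z_{i_θ}) + ε z_{i_θ}`, and since
`ε ≤ L_{W,Θ} ≤ Σ_j w_{i_θ,j}` the right-hand side is at least `ε`.
-/

/-- `max{w_{i} : position t precedes i in Θ}`, with the convention that the
max over the empty set is `0`. -/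
def laterMax {n θ : ℕ} (wj : Fin n → ℝ) (Θ : Fin (θ + 1) → Fin n) (t : Fin (θ + 1)) : ℝ :=
  (Finset.univ.filter (fun s => t < s)).fold max 0 (fun s => wj (Θ s))

/-- `L_{W,Θ} = min{ min_{t<θ} Σ_j min{w_{i_t,j}, max{w_{i,j} : i_t precedes i in Θ}},
Σ_j w_{i_θ,j} }`. -/
def LWT {n k θ : ℕ} (w : Fin n → Fin k → ℝ) (Θ : Fin (θ + 1) → Fin n) : ℝ :=
  Finset.univ.inf' Finset.univ_nonempty (fun t : Fin (θ + 1) =>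
    if (t : ℕ) < θ then ∑ j, min (w (Θ t) j) (laterMax (fun i => w i j) Θ t)
    else ∑ j, w (Θ t) j)

/-- `max{w_{i,j} : i ∈ Θ}`. -/
def thetaMax {n θ : ℕ} (wj : Fin n → ℝ) (Θ : Fin (θ + 1) → Fin n) : ℝ :=
  Finset.univ.fold max 0 (fun t => wj (Θ t))

/-- The left-hand side of the aggregated mixing inequality derived from `Θ`, written
(equivalently, via the identity `(coeff-transf)`) with coefficient
`(w_{i_t,j} − max{w_{i,j} : i_t precedes i in Θ})_+` on `z_{i_t}`:
`Σ_j (y_j + Σ_{s∈[τ_j]} (w_{j_s,j} − w_{j_{s+1},j}) z_{j_s}) − min{ε, L_{W,Θ}} z_{i_θ}`. -/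
def aggLHS {n k θ : ℕ} (w : Fin n → Fin k → ℝ) (ε : ℝ) (Θ : Fin (θ + 1) → Fin n)
    (y : Fin k → ℝ) (z : Fin n → ℝ) : ℝ :=
  (∑ j, (y j + ∑ t : Fin (θ + 1),
      max (w (Θ t) j - laterMax (fun i => w i j) Θ t) 0 * z (Θ t)))
    - min ε (LWT w Θ) * z (Θ (Fin.last θ))

theorem Finset.sum_mul_le_sum_sub_mul {ι R : Type*} [CommRing R] [PartialOrder R]
    [IsOrderedRing R] {s : Finset ι} {c z : ι → R} {i : ι} (hi : i ∈ s)
    (hc : ∀ t ∈ s, 0 ≤ c t) (hz : ∀ t ∈ s, z t ≤ 1) :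
    ∑ t ∈ s, c t * z t ≤ ∑ t ∈ s, c t - c i * (1 - z i) := by
  have hsingle : c i * (1 - z i) ≤ ∑ t ∈ s, c t * (1 - z t) :=
    Finset.single_le_sum (f := fun t => c t * (1 - z t))
      (fun t ht => mul_nonneg (hc t ht) (sub_nonneg.2 (hz t ht))) hi
  exact le_sub_comm.2 (hsingle.trans_eq (by simp only [mul_sub, mul_one, Finset.sum_sub_distrib]))

section SuffixMax

variable {n θ : ℕ} (wj : Fin n → ℝ) (Θ : Fin (θ + 1) → Fin n)

/-- Indexed by `ℕ` rather than `Fin (θ + 1)` so that the empty suffix `i = θ + 1` (value `0`)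
closes the telescoping sum. -/
def suffixMax (i : ℕ) : ℝ :=
  (Finset.univ.filter (fun s : Fin (θ + 1) => i ≤ s)).fold max 0 (fun s => wj (Θ s))

theorem laterMax_eq_suffixMax (t : Fin (θ + 1)) : laterMax wj Θ t = suffixMax wj Θ (t + 1) := by
  simp only [laterMax, suffixMax, Fin.lt_def, Nat.succ_le_iff]

theorem suffixMax_zero : suffixMax wj Θ 0 = thetaMax wj Θ := by
  simp only [suffixMax, thetaMax, Nat.zero_le, Finset.filter_true]

theorem suffixMax_of_le {i : ℕ} (hi : θ + 1 ≤ i) : suffixMax wj Θ i = 0 := by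
  rw [suffixMax, Finset.filter_false_of_mem fun s _ => by omega, Finset.fold_empty]

theorem suffixMax_eq_max (t : Fin (θ + 1)) :
    suffixMax wj Θ t = max (wj (Θ t)) (suffixMax wj Θ (t + 1)) := by
  have hinsert : Finset.univ.filter (fun s : Fin (θ + 1) => (t : ℕ) ≤ s) =
      insert t (Finset.univ.filter (fun s : Fin (θ + 1) => (t : ℕ) + 1 ≤ s)) := by
    ext s
    simp only [Finset.mem_filter, Finset.mem_insert, Finset.mem_univ, true_and, Fin.ext_iff]
    omega
  rw [suffixMax, hinsert, Finset.fold_insert (by simp), suffixMax]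

theorem laterMax_last : laterMax wj Θ (Fin.last θ) = 0 := by
  rw [laterMax_eq_suffixMax, suffixMax_of_le _ _ (by simp)]

theorem sum_max_sub_laterMax_eq_thetaMax :
    ∑ t, max (wj (Θ t) - laterMax wj Θ t) 0 = thetaMax wj Θ := by
  calc ∑ t, max (wj (Θ t) - laterMax wj Θ t) 0
      = ∑ t : Fin (θ + 1), (suffixMax wj Θ t - suffixMax wj Θ (t + 1)) := by
        refine Finset.sum_congr rfl fun t _ => ?_
        rw [laterMax_eq_suffixMax, suffixMax_eq_max, ← max_sub_sub_right, sub_self]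
    _ = ∑ i ∈ Finset.range (θ + 1), (suffixMax wj Θ i - suffixMax wj Θ (i + 1)) :=
        Fin.sum_univ_eq_sum_range (fun i => suffixMax wj Θ i - suffixMax wj Θ (i + 1)) _
    _ = thetaMax wj Θ := by
        rw [Finset.sum_range_sub', suffixMax_zero, suffixMax_of_le _ _ le_rfl, sub_zero]

end SuffixMax

theorem LWT_le_sum_last {n k θ : ℕ} (w : Fin n → Fin k → ℝ) (Θ : Fin (θ + 1) → Fin n) :
    LWT w Θ ≤ ∑ j, w (Θ (Fin.last θ)) j :=
  (Finset.inf'_le _ (Finset.mem_univ (Fin.last θ))).trans_eq (by simp)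

theorem stmt_8_general (n k θ : ℕ) (w : Fin n → Fin k → ℝ) (ε : ℝ)
    (Θ : Fin (θ + 1) → Fin n)
    (hLW : ε ≤ LWT w Θ)
    (y : Fin k → ℝ) (z : Fin n → ℝ)
    (hz1 : ∀ i, z i ≤ 1)
    (hagg : (∑ j, (y j + ∑ t : Fin (θ + 1),
          max (w (Θ t) j - laterMax (fun i => w i j) Θ t) 0 * z (Θ t)))
        - ε * z (Θ (Fin.last θ)) ≥ ∑ j, thetaMax (fun i => w i j) Θ) :
    ∑ j, y j ≥ ε := by
  set c : Fin k → Fin (θ + 1) → ℝ := fun j t => max (w (Θ t) j - laterMax (fun i => w i j) Θ t) 0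
  set zLast := z (Θ (Fin.last θ))
  have hcoef (j : Fin k) : ∑ t, c j t * z (Θ t) ≤
      thetaMax (fun i => w i j) Θ - c j (Fin.last θ) * (1 - zLast) := by
    rw [← sum_max_sub_laterMax_eq_thetaMax]
    exact Finset.sum_mul_le_sum_sub_mul (Finset.mem_univ _) (fun t _ => le_max_right _ _)
      fun t _ => hz1 _
  have hlast : ε ≤ ∑ j, c j (Fin.last θ) :=
    (hLW.trans (LWT_le_sum_last w Θ)).trans <| Finset.sum_le_sum fun j _ => by
      simp only [c, laterMax_last, sub_zero, le_max_left]
  have hweighted := mul_le_mul_of_nonneg_right hlast (sub_nonneg.2 (hz1 (Θ (Fin.last θ))))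
  have hsum := Finset.sum_le_sum fun j (_ : j ∈ Finset.univ) => hcoef j
  rw [Finset.sum_sub_distrib, ← Finset.sum_mul] at hsum
  rw [Finset.sum_add_distrib] at hagg
  linarith

/-- If `ε ≤ L_{W,Θ}`, then on the box `0 ≤ z ≤ 1` the aggregated mixing inequality derived
from `Θ` (whose `z_{i_θ}` coefficient is then `−ε`) implies the linking constraint
`Σ_j y_j ≥ ε`. -/
theorem stmt_8 (n k θ : ℕ) (w : Fin n → Fin k → ℝ) (ε : ℝ)
    (hw : ∀ i j, 0 ≤ w i j) (hε : 0 ≤ ε)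
    (Θ : Fin (θ + 1) → Fin n) (hΘ : Function.Injective Θ)
    (hLW : ε ≤ LWT w Θ)
    (y : Fin k → ℝ) (z : Fin n → ℝ)
    (hz0 : ∀ i, 0 ≤ z i) (hz1 : ∀ i, z i ≤ 1)
    (hagg : (∑ j, (y j + ∑ t : Fin (θ + 1),
          max (w (Θ t) j - laterMax (fun i => w i j) Θ t) 0 * z (Θ t)))
        - ε * z (Θ (Fin.last θ)) ≥ ∑ j, thetaMax (fun i => w i j) Θ) :
    ∑ j, y j ≥ ε :=
  stmt_8_general n k θ w ε Θ hLW y z hz1 hagg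
end

section
/- The function g(U) = max{ε, Σ_{j∈[k]} max_{i∈U} w_{i,j}} is submodular on 2^{[n]} if and only if Ī(ε) is ε-negligible and ε ≤ L_W(ε). -/
set_option linter.unusedSectionVars false
set_option linter.unusedVariables false
set_option maxHeartbeats 1000000

section helpers
variable {α : Type*} [DecidableEq α] {f : α → ℝ}

lemma fold_nonneg' (hf : ∀ i, 0 ≤ f i) (U : Finset α) : 0 ≤ U.fold max 0 f :=
  (Finset.le_fold_max _).2 (Or.inl le_rfl)

lemma le_fold' {U : Finset α} {i : α} (hi : i ∈ U) : f i ≤ U.fold max 0 f :=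
  (Finset.le_fold_max _).2 (Or.inr ⟨i, hi, le_rfl⟩)

lemma fold_mono' (hf : ∀ i, 0 ≤ f i) {U V : Finset α} (h : U ⊆ V) :
    U.fold max 0 f ≤ V.fold max 0 f :=
  (Finset.fold_max_le _).2 ⟨fold_nonneg' hf V, fun x hx => le_fold' (h hx)⟩

lemma fold_union' (hf : ∀ i, 0 ≤ f i) (A B : Finset α) :
    (A ∪ B).fold max 0 f = max (A.fold max 0 f) (B.fold max 0 f) := by
  apply le_antisymm
  · refine (Finset.fold_max_le _).2 ⟨le_max_of_le_left (fold_nonneg' hf A), fun x hx => ?_⟩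
    rcases Finset.mem_union.1 hx with h | h
    · exact le_max_of_le_left (le_fold' h)
    · exact le_max_of_le_right (le_fold' h)
  · exact max_le (fold_mono' hf Finset.subset_union_left)
      (fold_mono' hf Finset.subset_union_right)

lemma fold_singleton' (hf : ∀ i, 0 ≤ f i) (p : α) :
    ({p} : Finset α).fold max 0 f = f p := by
  rw [Finset.fold_singleton]; exact max_eq_left (hf p)
end helpers

/-- `g(U) = max{ε, Σ_{j∈[k]} max_{i∈U} w_{i,j}}`, with the convention that the max over
the empty set is `0`. -/
def gfun {n k : ℕ} (w : Fin n → Fin k → ℝ) (ε : ℝ) (U : Finset (Fin n)) : ℝ :=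
  max ε (∑ j, U.fold max 0 (fun i => w i j))

/-- `Ī(ε) = {i ∈ [n] : Σ_j w_{i,j} ≤ ε}`. -/
noncomputable def Ibar {n k : ℕ} (w : Fin n → Fin k → ℝ) (ε : ℝ) : Finset (Fin n) :=
  Finset.univ.filter (fun i => ∑ j, w i j ≤ ε)

/-- `Ī(ε)` is `ε`-negligible: either `Ī(ε) = ∅`, or both
(C1) `max_{i∈Ī(ε)} w_{i,j} ≤ w_{i',j}` for every `i' ∉ Ī(ε)` and every `j`, and
(C2) `Σ_j max_{i∈Ī(ε)} w_{i,j} ≤ ε`. -/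
def epsNegligible {n k : ℕ} (w : Fin n → Fin k → ℝ) (ε : ℝ) : Prop :=
  Ibar w ε = ∅ ∨
    ((∀ i' ∉ Ibar w ε, ∀ j, (Ibar w ε).fold max 0 (fun i => w i j) ≤ w i' j) ∧
      ∑ j, (Ibar w ε).fold max 0 (fun i => w i j) ≤ ε)

section main
variable {n k : ℕ} (w : Fin n → Fin k → ℝ) (ε : ℝ)

lemma mem_Ibar_iff (i : Fin n) : i ∈ Ibar w ε ↔ ∑ j, w i j ≤ ε := by
  simp [Ibar]

lemma gfun_empty (hε : 0 ≤ ε) : gfun w ε ∅ = ε := by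
  simp [gfun, max_eq_left hε]

lemma gfun_singleton (hw : ∀ i j, 0 ≤ w i j) (p : Fin n) :
    gfun w ε ({p} : Finset (Fin n)) = max ε (∑ j, w p j) := by
  unfold gfun
  congr 1
  exact Finset.sum_congr rfl fun j _ => fold_singleton' (fun i => hw i j) p

lemma eps_le_gfun (U : Finset (Fin n)) : ε ≤ gfun w ε U := le_max_left _ _

lemma minmax_identity (a b : Fin k → ℝ) :
    (∑ j, a j) + (∑ j, b j) = (∑ j, max (a j) (b j)) + (∑ j, min (a j) (b j)) := by
  rw [← Finset.sum_add_distrib, ← Finset.sum_add_distrib]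
  exact Finset.sum_congr rfl fun j _ => (max_add_min (a j) (b j)).symm

end main

/-- `g` is submodular if and only if `Ī(ε)` is `ε`-negligible and `ε ≤ L_W(ε)`, the latter
expressed as `ε ≤ Σ_j min{w_{p,j}, w_{q,j}}` for all `p,q ∉ Ī(ε)`. -/
theorem stmt_12 (n k : ℕ) (w : Fin n → Fin k → ℝ) (ε : ℝ)
    (hw : ∀ i j, 0 ≤ w i j) (hε : 0 ≤ ε) :
    (∀ A B : Finset (Fin n),
        gfun w ε A + gfun w ε B ≥ gfun w ε (A ∪ B) + gfun w ε (A ∩ B)) ↔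
      (epsNegligible w ε ∧
        ∀ p q : Fin n, p ∉ Ibar w ε → q ∉ Ibar w ε →
          ε ≤ ∑ j, min (w p j) (w q j)) := by
  constructor
  · intro h
    -- from non-membership in Ibar
    have hout : ∀ p : Fin n, p ∉ Ibar w ε → ε < ∑ j, w p j := by
      intro p hp
      by_contra hc
      exact hp ((mem_Ibar_iff w ε p).2 (le_of_not_gt hc))
    -- gfun of any subset of Ibar equals ε
    have key : ∀ S : Finset (Fin n), S ⊆ Ibar w ε → gfun w ε S = ε := by
      intro S
      induction S using Finset.induction_on with
      | empty => intro _; exact gfun_empty w ε hε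
      | @insert a S ha ih =>
        intro hsub
        have haI : a ∈ Ibar w ε := hsub (Finset.mem_insert_self a S)
        have hSI : S ⊆ Ibar w ε := fun x hx => hsub (Finset.mem_insert_of_mem hx)
        have hga : gfun w ε ({a} : Finset (Fin n)) = ε := by
          rw [gfun_singleton w ε hw a]
          exact max_eq_left ((mem_Ibar_iff w ε a).1 haI)
        have hSa : S ∪ {a} = insert a S := by
          rw [Finset.union_comm]; rfl
        have hSi : S ∩ {a} = ∅ := by
          rw [Finset.inter_comm]
          exact Finset.singleton_inter_of_notMem ha
        have := h S {a}
        rw [hSa, hSi, gfun_empty w ε hε, ih hSI, hga] at this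
        have h2 := eps_le_gfun w ε (insert a S)
        linarith
    constructor
    · right
      have hC2 : ∑ j, (Ibar w ε).fold max 0 (fun i => w i j) ≤ ε := by
        have hg := key (Ibar w ε) (Finset.Subset.refl _)
        unfold gfun at hg
        exact le_trans (le_max_right ε _) (le_of_eq hg)
      refine ⟨?_, hC2⟩
      intro i' hi' j
      refine (Finset.fold_max_le _).2 ⟨hw i' j, fun i hi => ?_⟩
      by_contra hlt
      have hlt : w i' j < w i j := lt_of_not_ge hlt
      have hii' : i ≠ i' := fun e => hi' (e ▸ hi)
      have hgi : gfun w ε ({i} : Finset (Fin n)) = ε := by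
        rw [gfun_singleton w ε hw i]
        exact max_eq_left ((mem_Ibar_iff w ε i).1 hi)
      have hgi' : gfun w ε ({i'} : Finset (Fin n)) = ∑ j, w i' j := by
        rw [gfun_singleton w ε hw i']
        exact max_eq_right (le_of_lt (hout i' hi'))
      have hint : ({i} : Finset (Fin n)) ∩ {i'} = ∅ :=
        Finset.singleton_inter_of_notMem (by simp [hii'])
      have hFU : ∑ j, max (w i j) (w i' j) ≤ gfun w ε ({i} ∪ {i'} : Finset (Fin n)) := by
        refine le_trans (le_of_eq ?_) (le_max_right _ _)
        refine Finset.sum_congr rfl fun j _ => ?_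
        rw [fold_union' (fun i => hw i j), fold_singleton' (fun i => hw i j),
          fold_singleton' (fun i => hw i j)]
      have hsum : ∑ j, w i' j < ∑ j, max (w i j) (w i' j) := by
        refine Finset.sum_lt_sum (fun j _ => le_max_right _ _) ⟨j, Finset.mem_univ j, ?_⟩
        exact lt_of_lt_of_le hlt (le_max_left _ _)
      have := h {i} {i'}
      rw [hint, gfun_empty w ε hε, hgi, hgi'] at this
      linarith
    · intro p q hp hq
      by_cases hpq : p = q
      · subst hpq
        have : ∑ j, min (w p j) (w p j) = ∑ j, w p j :=
          Finset.sum_congr rfl fun j _ => min_self _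
        rw [this]
        exact le_of_lt (hout p hp)
      · have hgp : gfun w ε ({p} : Finset (Fin n)) = ∑ j, w p j := by
          rw [gfun_singleton w ε hw p]; exact max_eq_right (le_of_lt (hout p hp))
        have hgq : gfun w ε ({q} : Finset (Fin n)) = ∑ j, w q j := by
          rw [gfun_singleton w ε hw q]; exact max_eq_right (le_of_lt (hout q hq))
        have hint : ({p} : Finset (Fin n)) ∩ {q} = ∅ :=
          Finset.singleton_inter_of_notMem (by simp [hpq])
        have hFU : ∑ j, max (w p j) (w q j) ≤ gfun w ε ({p} ∪ {q} : Finset (Fin n)) := by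
          refine le_trans (le_of_eq ?_) (le_max_right _ _)
          refine Finset.sum_congr rfl fun j _ => ?_
          rw [fold_union' (fun i => hw i j), fold_singleton' (fun i => hw i j),
            fold_singleton' (fun i => hw i j)]
        have := h {p} {q}
        rw [hint, gfun_empty w ε hε, hgp, hgq] at this
        have hid := minmax_identity (w p) (w q)
        linarith
  · rintro ⟨hneg, hL⟩ A B
    -- B1 : F of a subset of Ibar is ≤ ε
    have B1 : ∀ S : Finset (Fin n), S ⊆ Ibar w ε →
        ∑ j, S.fold max 0 (fun i => w i j) ≤ ε := by
      intro S hS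
      rcases hneg with hemp | ⟨hC1, hC2⟩
      · have : S = ∅ := Finset.subset_empty.1 (hemp ▸ hS)
        subst this
        simpa using hε
      · refine le_trans ?_ hC2
        exact Finset.sum_le_sum (fun j _ => fold_mono' (fun i => hw i j) hS)
    -- B2 : if S has a non-negligible element, folds over S and S \ Ibar agree
    have B2 : ∀ S : Finset (Fin n), (S \ Ibar w ε).Nonempty → ∀ j,
        S.fold max 0 (fun i => w i j) = (S \ Ibar w ε).fold max 0 (fun i => w i j) := by
      intro S hS j
      obtain ⟨i', hi'⟩ := hS
      have hi'S : i' ∈ S := (Finset.mem_sdiff.1 hi').1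
      have hi'I : i' ∉ Ibar w ε := (Finset.mem_sdiff.1 hi').2
      apply le_antisymm
      · refine (Finset.fold_max_le _).2 ⟨fold_nonneg' (fun i => hw i j) _, fun i hi => ?_⟩
        by_cases hiI : i ∈ Ibar w ε
        · rcases hneg with hemp | ⟨hC1, hC2⟩
          · exact absurd (hemp ▸ hiI) (Finset.notMem_empty i)
          · calc w i j ≤ (Ibar w ε).fold max 0 (fun i => w i j) := le_fold' (f := fun i => w i j) hiI
              _ ≤ w i' j := hC1 i' hi'I j
              _ ≤ (S \ Ibar w ε).fold max 0 (fun i => w i j) := le_fold' (f := fun i => w i j) hi'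
        · exact le_fold' (f := fun i => w i j) (Finset.mem_sdiff.2 ⟨hi, hiI⟩)
      · exact fold_mono' (fun i => hw i j) (Finset.sdiff_subset)
    have gle : ∀ S : Finset (Fin n), S ⊆ Ibar w ε → gfun w ε S = ε := by
      intro S hS
      exact max_eq_left (B1 S hS)
    by_cases hA : (A \ Ibar w ε).Nonempty <;> by_cases hB : (B \ Ibar w ε).Nonempty
    · -- both have non-negligible elements
      obtain ⟨p, hp⟩ := hA
      obtain ⟨q, hq⟩ := hB
      have hpA : p ∈ A := (Finset.mem_sdiff.1 hp).1
      have hpI : p ∉ Ibar w ε := (Finset.mem_sdiff.1 hp).2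
      have hqB : q ∈ B := (Finset.mem_sdiff.1 hq).1
      have hqI : q ∉ Ibar w ε := (Finset.mem_sdiff.1 hq).2
      set mA : Fin k → ℝ := fun j => A.fold max 0 (fun i => w i j) with hmA
      set mB : Fin k → ℝ := fun j => B.fold max 0 (fun i => w i j) with hmB
      have hεA : ε ≤ ∑ j, mA j := by
        refine le_trans (hL p p hpI hpI) (Finset.sum_le_sum fun j _ => ?_)
        exact le_trans (le_of_eq (min_self _)) (le_fold' (f := fun i => w i j) hpA)
      have hεB : ε ≤ ∑ j, mB j := by
        refine le_trans (hL q q hqI hqI) (Finset.sum_le_sum fun j _ => ?_)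
        exact le_trans (le_of_eq (min_self _)) (le_fold' (f := fun i => w i j) hqB)
      have hFU : ∀ j : Fin k, (A ∪ B).fold max 0 (fun i => w i j) = max (mA j) (mB j) :=
        fun j => fold_union' (fun i => hw i j) A B
      have hεM : ε ≤ ∑ j, min (mA j) (mB j) := by
        refine le_trans (hL p q hpI hqI) (Finset.sum_le_sum fun j _ => ?_)
        exact min_le_min (le_fold' (f := fun i => w i j) hpA) (le_fold' (f := fun i => w i j) hqB)
      have hFI : ∑ j, (A ∩ B).fold max 0 (fun i => w i j) ≤ ∑ j, min (mA j) (mB j) := by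
        refine Finset.sum_le_sum fun j _ => le_min ?_ ?_
        · exact fold_mono' (fun i => hw i j) Finset.inter_subset_left
        · exact fold_mono' (fun i => hw i j) Finset.inter_subset_right
      have hεU : ε ≤ ∑ j, (A ∪ B).fold max 0 (fun i => w i j) := by
        refine le_trans hεA (Finset.sum_le_sum fun j _ => ?_)
        rw [hFU j]; exact le_max_left _ _
      have hid : (∑ j, mA j) + (∑ j, mB j) =
          (∑ j, (A ∪ B).fold max 0 (fun i => w i j)) + (∑ j, min (mA j) (mB j)) := by
        rw [Finset.sum_congr rfl fun j _ => hFU j]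
        exact minmax_identity mA mB
      have egA : gfun w ε A = ∑ j, mA j := max_eq_right hεA
      have egB : gfun w ε B = ∑ j, mB j := max_eq_right hεB
      have egU : gfun w ε (A ∪ B) = ∑ j, (A ∪ B).fold max 0 (fun i => w i j) :=
        max_eq_right hεU
      have egI : gfun w ε (A ∩ B) ≤ ∑ j, min (mA j) (mB j) := max_le hεM hFI
      rw [ge_iff_le, egA, egB, egU]
      linarith
    · -- A has, B doesn't : B ⊆ Ibar
      have hBsub : B ⊆ Ibar w ε := by
        rw [← Finset.sdiff_eq_empty_iff_subset]
        exact Finset.not_nonempty_iff_eq_empty.1 hB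
      have hUd : (A ∪ B) \ Ibar w ε = A \ Ibar w ε := by
        rw [Finset.union_sdiff_distrib, Finset.sdiff_eq_empty_iff_subset.2 hBsub,
          Finset.union_empty]
      have hUA : gfun w ε (A ∪ B) = gfun w ε A := by
        unfold gfun
        congr 1
        refine Finset.sum_congr rfl fun j _ => ?_
        rw [B2 (A ∪ B) (hUd ▸ hA) j, hUd, ← B2 A hA j]
      have hIB : gfun w ε (A ∩ B) = ε :=
        gle _ (fun x hx => hBsub (Finset.mem_inter.1 hx).2)
      rw [ge_iff_le, hUA, hIB, gle B hBsub]
    · -- B has, A doesn't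
      have hAsub : A ⊆ Ibar w ε := by
        rw [← Finset.sdiff_eq_empty_iff_subset]
        exact Finset.not_nonempty_iff_eq_empty.1 hA
      have hUd : (A ∪ B) \ Ibar w ε = B \ Ibar w ε := by
        rw [Finset.union_sdiff_distrib, Finset.sdiff_eq_empty_iff_subset.2 hAsub,
          Finset.empty_union]
      have hUB : gfun w ε (A ∪ B) = gfun w ε B := by
        unfold gfun
        congr 1
        refine Finset.sum_congr rfl fun j _ => ?_
        rw [B2 (A ∪ B) (hUd ▸ hB) j, hUd, ← B2 B hB j]
      have hIA : gfun w ε (A ∩ B) = ε :=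
        gle _ (fun x hx => hAsub (Finset.mem_inter.1 hx).1)
      rw [ge_iff_le, hUB, hIA, gle A hAsub]
      linarith
    · -- neither
      have hAsub : A ⊆ Ibar w ε := by
        rw [← Finset.sdiff_eq_empty_iff_subset]
        exact Finset.not_nonempty_iff_eq_empty.1 hA
      have hBsub : B ⊆ Ibar w ε := by
        rw [← Finset.sdiff_eq_empty_iff_subset]
        exact Finset.not_nonempty_iff_eq_empty.1 hB
      rw [ge_iff_le, gle A hAsub, gle B hBsub,
        gle (A ∪ B) (Finset.union_subset hAsub hBsub),
        gle (A ∩ B) (fun x hx => hAsub (Finset.mem_inter.1 hx).1)]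
end
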